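/- Let E be a subspace of ℂ^m. If there exist f, g ∈ E with |f_j| = |g_j| for every coordinate j but f is not a unimodular multiple of g, then there exist F, G ∈ E that are orthogonal, satisfy |F_j| = |G_j| for every j, and F is not a unimodular multiple of G. -/

import Mathlib

/-!
Given `f, g` with `|f_j| = |g_j|` and independent, look for an orthogonal pair of the form
`F = f + τ̄ g`, `G = τ f + g`. Coordinatewise `|F_j| = |G_j|` holds for every `τ`, and
`⟪F, G⟫ = τ² ⟪f, g⟫̄ + (‖f‖² + ‖g‖²) τ + ⟪f, g⟫`. Since strict Cauchy–Schwarz gives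
`2 |⟪f, g⟫| < ‖f‖² + ‖g‖²`, this quadratic has a root with `|τ| < 1`, and for `|τ| ≠ 1`
independence of `f, g` prevents `F` from being a multiple of `G`.
-/

open ComplexConjugate

theorem Complex.norm_add_conj_mul_eq_norm_mul_add {u v : ℂ} (huv : ‖u‖ = ‖v‖) (τ : ℂ) :
    ‖u + conj τ * v‖ = ‖τ * u + v‖ := by
  have h : Complex.normSq u = Complex.normSq v := by
    rw [← Complex.sq_norm, ← Complex.sq_norm, huv]
  rw [Complex.norm_def, Complex.norm_def]
  congr 1
  simp only [Complex.normSq_apply, Complex.add_re, Complex.add_im, Complex.mul_re,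
    Complex.mul_im, Complex.conj_re, Complex.conj_im] at h ⊢
  linear_combination (1 - τ.re ^ 2 - τ.im ^ 2) * h

theorem exists_unimodular_smul_of_norm_apply_eq {𝕜 ι : Type*} [NormedField 𝕜]
    {f g : EuclideanSpace 𝕜 ι} (hfg : ∀ j, ‖f j‖ = ‖g j‖) {c : 𝕜} (hc : f = c • g) :
    ∃ c' : 𝕜, ‖c'‖ = 1 ∧ f = c' • g := by
  by_cases hg : g = 0
  · refine ⟨1, norm_one, ?_⟩
    ext j
    simpa [hg] using hfg j
  obtain ⟨j, hj⟩ : ∃ j, g j ≠ 0 := by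
    by_contra! h
    exact hg (PiLp.ext h)
  refine ⟨c, ?_, hc⟩
  have := hfg j
  rw [hc, PiLp.smul_apply, smul_eq_mul, norm_mul] at this
  exact (mul_eq_right₀ (norm_ne_zero_iff.mpr hj)).mp this

theorem linearIndependent_of_norm_apply_eq {𝕜 ι : Type*} [NormedField 𝕜]
    {f g : EuclideanSpace 𝕜 ι} (hfg : ∀ j, ‖f j‖ = ‖g j‖)
    (hne : ¬ ∃ c : 𝕜, ‖c‖ = 1 ∧ f = c • g) : LinearIndependent 𝕜 ![f, g] := by
  have hg : g ≠ 0 := fun hg => hne ⟨1, norm_one, by ext j; simpa [hg] using hfg j⟩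
  rw [LinearIndependent.pair_symm_iff, LinearIndependent.pair_iff' hg]
  exact fun c hc => hne (exists_unimodular_smul_of_norm_apply_eq hfg hc.symm)

theorem LinearIndependent.norm_inner_lt_norm_mul_norm {𝕜 V : Type*} [RCLike 𝕜]
    [NormedAddCommGroup V] [InnerProductSpace 𝕜 V] {f g : V} (h : LinearIndependent 𝕜 ![f, g]) :
    ‖(inner 𝕜 f g : 𝕜)‖ < ‖f‖ * ‖g‖ := by
  refine (norm_inner_le_norm f g).lt_of_ne fun heq => ?_
  rcases ((norm_inner_eq_norm_tfae 𝕜 f g).out 0 2).mp heq with hf | ⟨r, hr⟩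
  · exact h.ne_zero 0 hf
  · exact (LinearIndependent.pair_iff' (h.ne_zero 0)).mp h r hr.symm

theorem exists_mem_Ioc_quadratic_eq_zero {b s : ℝ} (hb : 0 ≤ b) (h : 2 * b < s) :
    ∃ x ∈ Set.Ioc (-1 : ℝ) 0, b * x ^ 2 + s * x + b = 0 := by
  obtain ⟨x, hx, hpx⟩ : ∃ x ∈ Set.Icc (-1 : ℝ) 0, b * x ^ 2 + s * x + b = 0 :=
    intermediate_value_Icc (by norm_num) (by fun_prop) ⟨by linarith, by linarith⟩
  refine ⟨x, ⟨hx.1.lt_of_ne ?_, hx.2⟩, hpx⟩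
  rintro rfl
  linarith

theorem Complex.exists_norm_lt_one_sq_mul_conj_add_eq_zero {a : ℂ} {s : ℝ} (h : 2 * ‖a‖ < s) :
    ∃ τ : ℂ, ‖τ‖ < 1 ∧ τ ^ 2 * conj a + s * τ + a = 0 := by
  obtain ⟨x, hx, hpx⟩ := exists_mem_Ioc_quadratic_eq_zero (norm_nonneg a) h
  by_cases ha : a = 0
  · exact ⟨0, by simp, by simp [ha]⟩
  -- on the ray `τ = x a / |a|` the equation becomes `|a| x² + s x + |a| = 0`
  have hn : (‖a‖ : ℂ) ≠ 0 := by simpa using ha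
  refine ⟨x * (a / ‖a‖), ?_, ?_⟩
  · have hnorm : ‖(x : ℂ) * (a / ‖a‖)‖ = |x| := by simp [ha]
    rw [hnorm, abs_lt]
    exact ⟨hx.1, hx.2.trans_lt one_pos⟩
  · have hmc : a * conj a = (‖a‖ : ℂ) ^ 2 := Complex.mul_conj' a
    have hpx' : (‖a‖ : ℂ) * x ^ 2 + s * x + ‖a‖ = 0 := by exact_mod_cast hpx
    field_simp
    linear_combination a * ‖a‖ * hpx' + a * x ^ 2 * hmc

theorem inner_add_conj_smul_smul_add {V : Type*} [NormedAddCommGroup V] [InnerProductSpace ℂ V]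
    (f g : V) (τ : ℂ) :
    (inner ℂ (f + conj τ • g) (τ • f + g) : ℂ) =
      τ ^ 2 * conj (inner ℂ f g) + ((‖f‖ ^ 2 + ‖g‖ ^ 2 : ℝ) : ℂ) * τ + inner ℂ f g := by
  simp only [inner_add_left, inner_add_right, inner_smul_left, inner_smul_right,
    inner_self_eq_norm_sq_to_K, Complex.conj_conj, inner_conj_symm,
    RCLike.ofReal_eq_complex_ofReal]
  push_cast
  ring

theorem LinearIndependent.add_conj_smul_ne_smul_smul_add {V : Type*} [AddCommGroup V] [Module ℂ V]
    {f g : V}     (h : LinearIndependent ℂ ![f, g]) {τ : ℂ} (hτ : ‖τ‖ ≠ 1) (c : ℂ) :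
    f + conj τ • g ≠ c • (τ • f + g) := by
  intro heq
  obtain ⟨h1, h2⟩ := LinearIndependent.pair_iff.mp h (1 - c * τ) (conj τ - c)
    (by linear_combination (norm := module) heq)
  refine hτ ((pow_eq_one_iff_of_nonneg (norm_nonneg τ) two_ne_zero).mp ?_)
  have : ((‖τ‖ ^ 2 : ℝ) : ℂ) = 1 := by
    rw [Complex.ofReal_pow, ← Complex.mul_conj']
    linear_combination τ * h2 - h1
  exact_mod_cast this

theorem LinearIndependent.exists_norm_lt_one_inner_add_conj_smul_smul_add_eq_zero {V : Type*}
    [NormedAddCommGroup V] [InnerProductSpace ℂ V] {f g : V} (h : LinearIndependent ℂ ![f, g]) :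
    ∃ τ : ℂ, ‖τ‖ < 1 ∧ (inner ℂ (f + conj τ • g) (τ • f + g) : ℂ) = 0 := by
  have hlt : 2 * ‖(inner ℂ f g : ℂ)‖ < ‖f‖ ^ 2 + ‖g‖ ^ 2 := by
    nlinarith [h.norm_inner_lt_norm_mul_norm, two_mul_le_add_sq ‖f‖ ‖g‖]
  obtain ⟨τ, hτ, hroot⟩ := Complex.exists_norm_lt_one_sq_mul_conj_add_eq_zero hlt
  exact ⟨τ, hτ, by rw [inner_add_conj_smul_smul_add, hroot]⟩

/-- If a subspace `E` of `ℂ^m` contains two vectors with entrywise equal moduli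
that are not unimodular multiples of each other, then it contains two such vectors that are
moreover orthogonal. -/
theorem stmt_0 (m : ℕ) (E : Submodule ℂ (EuclideanSpace ℂ (Fin m)))
    (h : ∃ f ∈ E, ∃ g ∈ E, (∀ j, ‖f j‖ = ‖g j‖) ∧
      ¬ ∃ c : ℂ, ‖c‖ = 1 ∧ f = c • g) :
    ∃ F ∈ E, ∃ G ∈ E, (inner ℂ F G : ℂ) = 0 ∧
      (∀ j, ‖F j‖ = ‖G j‖) ∧
      ¬ ∃ c : ℂ, ‖c‖ = 1 ∧ F = c • G := by
  obtain ⟨f, hf, g, hg, hfg, hne⟩ := h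
  have hli := linearIndependent_of_norm_apply_eq hfg hne
  obtain ⟨τ, hτ, horth⟩ := hli.exists_norm_lt_one_inner_add_conj_smul_smul_add_eq_zero
  refine ⟨f + conj τ • g, E.add_mem hf (E.smul_mem _ hg), τ • f + g,
    E.add_mem (E.smul_mem _ hf) hg, horth, fun j => ?_,
    fun ⟨c, _, hc⟩ => hli.add_conj_smul_ne_smul_smul_add hτ.ne c hc⟩
  simpa using Complex.norm_add_conj_mul_eq_norm_mul_add (hfg j) τ
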